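/- Let p be a finite nonempty word over a signed alphabet such that p^∞ is not the ≺-minimum word ω_σ of W_k. If p is primitive, or p = d² with d primitive and ‖d‖ odd, then for every m with 2m ≥ n and every word ζ of length n−1 ending in a suffix structure compatible with p, the shifts (ζ p^{2m} ω_σ)_{[i,∞)} for 1 ≤ i ≤ n are pairwise distinct, provided no suffix z_{[i,n−1]} of ζ is a power of the primitive root of p with p^∞ = ω_σ. In particular, if σ_0 = − and σ_{k−1} = + (so ω_σ = 0(k−1)^∞ is not periodic), the n shifts of ζ p^{2m} ω_σ are always pairwise distinct for 2m ≥ n. -/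

import Mathlib

/-- `m`-fold concatenation of the word `a`. -/
def wpow {α : Type*} (a : List α) (m : ℕ) : List α := (List.replicate m a).flatten

/-- A finite word is primitive if it is not a power `a^m` with `m > 1`. -/
def Primitive {α : Type*} (w : List α) : Prop := ¬ ∃ a m, 1 < m ∧ w = wpow a m

/-- The signed order on infinite `k`-ary words determined by the signature `neg`
(`neg t = true` means `σ_t = -`): `v ≺ w` iff at the first index `j` where they differ,
`v j < w j` when the number of earlier letters with negative sign is even,
and `v j > w j` when it is odd. -/
def sLess {k : ℕ} (neg : Fin k → Bool) (v w : ℕ → Fin k) : Prop :=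
  ∃ j, (∀ i < j, v i = w i) ∧
    (if ((Finset.range j).filter (fun i => neg (v i) = true)).card % 2 = 0
      then v j < w j else w j < v j)

/-- The periodic infinite word `d^∞` with period a nonempty finite word `d`. -/
def periodic {k : ℕ} (d : List (Fin k)) (hd : 0 < d.length) : ℕ → Fin k :=
  fun n => d.get ⟨n % d.length, Nat.mod_lt _ hd⟩

/-- The infinite word obtained by prepending the finite word `d` to the infinite word `v`. -/
def prepend {k : ℕ} (d : List (Fin k)) (v : ℕ → Fin k) : ℕ → Fin k :=
  fun n => if h : n < d.length then d.get ⟨n, h⟩ else v (n - d.length)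

/-- The `≺`-minimum word `ω_σ` of `W_k`: `0^∞` if `σ_0 = +`; `0(k-1)^∞` if `σ_0 = -` and
`σ_{k-1} = +`; `(0(k-1))^∞` if `σ_0 = σ_{k-1} = -`. -/
def omegaWord {k : ℕ} (hk : 2 ≤ k) (neg : Fin k → Bool) : ℕ → Fin k :=
  if neg ⟨0, by omega⟩ = false then fun _ => ⟨0, by omega⟩
  else if neg ⟨k - 1, by omega⟩ = false then
    fun n => if n = 0 then ⟨0, by omega⟩ else ⟨k - 1, by omega⟩
  else fun n => if n % 2 = 0 then ⟨0, by omega⟩ else ⟨k - 1, by omega⟩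

lemma wpow_length {α : Type*} (p : List α) (M : ℕ) :
    (wpow p M).length = M * p.length := by
  simp [wpow, List.length_flatten, List.map_replicate, List.sum_replicate, smul_eq_mul]

lemma wpow_getElem {α : Type*} (p : List α) (hp : 0 < p.length) :
    ∀ (M a : ℕ) (ha : a < (wpow p M).length),
    (wpow p M)[a] = p[a % p.length]'(Nat.mod_lt _ hp) := by
  intro M
  induction M with
  | zero => intro a ha; simp [wpow] at ha
  | succ M ih =>
    intro a ha
    have he : wpow p (M+1) = p ++ wpow p M := by
      simp [wpow, List.replicate_succ]
    have ha' : a < (p ++ wpow p M).length := by rw [← he]; exact ha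
    have h0 : (wpow p (M+1))[a] = (p ++ wpow p M)[a]'ha' := by
      simp_rw [he]
    refine h0.trans ?_
    by_cases h : a < p.length
    · rw [List.getElem_append_left h]
      simp [Nat.mod_eq_of_lt h]
    · push_neg at h
      have hlt : a - p.length < (wpow p M).length := by
        simp [List.length_append] at ha'; omega
      rw [List.getElem_append_right h, ih (a - p.length) hlt]
      congr 1
      conv_rhs => rw [Nat.mod_eq_sub_mod h]

lemma period_iter {α : Type*} (f : ℕ → α) (t : ℕ) (h : ∀ a, f (a + t) = f a) :
    ∀ s a, f (a + s * t) = f a := by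
  intro s
  induction s with
  | zero => simp
  | succ s ih => intro a; have := h (a + s * t); rw [Nat.succ_mul, ← Nat.add_assoc, this, ih]

lemma period_mod {α : Type*} (f : ℕ → α) (t : ℕ) (h : ∀ a, f (a + t) = f a) :
    ∀ a, f a = f (a % t) := by
  intro a
  conv_lhs => rw [← Nat.mod_add_div' a t]
  exact period_iter f t h (a / t) (a % t)

lemma key (k n : ℕ) (hk : 2 ≤ k) (neg : Fin k → Bool) (p : List (Fin k)) (hp : 0 < p.length)
    (ζ : List (Fin k)) (hζ : ζ.length = n - 1) (m : ℕ) (hm : n ≤ 2 * m)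
    (i j : ℕ) (hi : i < n) (hj : j < n) (hij : i < j)
    (heq : (fun a => prepend ζ (prepend (wpow p (2 * m)) (omegaWord hk neg)) (a + i)) =
           (fun a => prepend ζ (prepend (wpow p (2 * m)) (omegaWord hk neg)) (a + j))) :
    periodic p hp = omegaWord hk neg := by
  set W := prepend ζ (prepend (wpow p (2 * m)) (omegaWord hk neg)) with hW
  set t := j - i with htdef
  have hq : 0 < p.length := hp
  have ht : 0 < t := by omega
  have hn : 2 ≤ n := by omega
  have heq' : ∀ a, W (a + i) = W (a + j) := fun a => congrFun heq a
  have hper : ∀ x, i ≤ x → W (x + t) = W x := by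
    intro x hx
    have h1 := heq' (x - i)
    have e1 : x - i + i = x := by omega
    have e2 : x - i + j = x + t := by omega
    rw [e1, e2] at h1
    exact h1.symm
  set u : ℕ → Fin k := fun a => W (a + (n - 1)) with hu
  have hut : ∀ a, u (a + t) = u a := by
    intro a
    show W (a + t + (n - 1)) = W (a + (n - 1))
    have e : a + t + (n - 1) = (a + (n - 1)) + t := by omega
    rw [e]
    exact hper _ (by omega)
  have hA : ∀ a, a < 2 * m * p.length → u a = periodic p hp a := by
    intro a ha
    show W (a + (n - 1)) = _
    have hnlt : ¬ (a + (n - 1) < ζ.length) := by rw [hζ]; omega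
    have e1 : a + (n - 1) - ζ.length = a := by rw [hζ]; omega
    have hwl : a < (wpow p (2 * m)).length := by rw [wpow_length]; exact ha
    rw [hW]
    simp only [prepend, dif_neg hnlt, e1, dif_pos hwl]
    rw [List.get_eq_getElem, wpow_getElem p hp (2 * m) a hwl]
    simp [periodic]
  have hB : ∀ a, u (2 * m * p.length + a) = omegaWord hk neg a := by
    intro a
    show W (2 * m * p.length + a + (n - 1)) = _
    have hnlt : ¬ (2 * m * p.length + a + (n - 1) < ζ.length) := by rw [hζ]; omega
    have e1 : 2 * m * p.length + a + (n - 1) - ζ.length = 2 * m * p.length + a := by rw [hζ]; omega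
    have hwl : ¬ (2 * m * p.length + a < (wpow p (2 * m)).length) := by rw [wpow_length]; omega
    have e2 : 2 * m * p.length + a - (wpow p (2 * m)).length = a := by rw [wpow_length]; omega
    rw [hW]
    simp only [prepend, dif_neg hnlt, e1, dif_neg hwl, e2]
  have hU : ∀ a, u a = periodic p hp a := by
    intro a
    have h1 : ∀ b, u (b + t * p.length) = u b := by
      intro b
      have := period_iter u t hut p.length b
      rwa [mul_comm] at this
    have h2 : u a = u (a % (t * p.length)) := period_mod u (t * p.length) h1 a
    have htq : 0 < t * p.length := by positivity
    have hlt : a % (t * p.length) < 2 * m * p.length := by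
      have h3 : a % (t * p.length) < t * p.length := Nat.mod_lt _ htq
      have h4 : t * p.length ≤ 2 * m * p.length := Nat.mul_le_mul_right p.length (by omega)
      omega
    rw [h2, hA _ hlt]
    have e : (a % (t * p.length)) % p.length = a % p.length := Nat.mod_mod_of_dvd a (dvd_mul_left p.length t)
    simp [periodic, e]
  funext a
  have h1 := hB a
  rw [hU (2 * m * p.length + a)] at h1
  rw [← h1]
  have e : (2 * m * p.length + a) % p.length = a % p.length := by
    rw [Nat.add_comm, Nat.add_mul_mod_self_right]
  simp [periodic, e]

/-- Let `p` be a nonempty finite word which is primitive, or equal to `d²` for a primitive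
word `d` with `‖d‖` odd, and suppose `p^∞ ≠ ω_σ`. Then for any word `ζ` of length `n-1`
and any `m` with `2m ≥ n`, the first `n` shifts of the word `ζ p^{2m} ω_σ` are pairwise
distinct. In particular, when `σ_0 = -` and `σ_{k-1} = +` (so that `ω_σ = 0(k-1)^∞` is not
periodic), the hypothesis `p^∞ ≠ ω_σ` holds automatically and the `n` shifts are always
pairwise distinct for `2m ≥ n`. -/
theorem stmt19 (k n : ℕ) (hk : 2 ≤ k) (neg : Fin k → Bool)
    (p : List (Fin k)) (hp : 0 < p.length)
    (hprim : Primitive p ∨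
      ∃ d : List (Fin k), p = d ++ d ∧ Primitive d ∧ Odd (d.countP (fun t => neg t)))
    (ζ : List (Fin k)) (hζ : ζ.length = n - 1) (m : ℕ) (hm : n ≤ 2 * m) :
    ((periodic p hp ≠ omegaWord hk neg →
      ∀ i j : ℕ, i < n → j < n → i ≠ j →
        (fun a => prepend ζ (prepend (wpow p (2 * m)) (omegaWord hk neg)) (a + i)) ≠
        (fun a => prepend ζ (prepend (wpow p (2 * m)) (omegaWord hk neg)) (a + j))) ∧
    (neg ⟨0, by omega⟩ = true → neg ⟨k - 1, by omega⟩ = false →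
      ∀ i j : ℕ, i < n → j < n → i ≠ j →
        (fun a => prepend ζ (prepend (wpow p (2 * m)) (omegaWord hk neg)) (a + i)) ≠
        (fun a => prepend ζ (prepend (wpow p (2 * m)) (omegaWord hk neg)) (a + j)))) := by
  have main : periodic p hp ≠ omegaWord hk neg →
      ∀ i j : ℕ, i < n → j < n → i ≠ j →
        (fun a => prepend ζ (prepend (wpow p (2 * m)) (omegaWord hk neg)) (a + i)) ≠
        (fun a => prepend ζ (prepend (wpow p (2 * m)) (omegaWord hk neg)) (a + j)) := by
    intro hne i j hi hj hij heq
    rcases Nat.lt_or_ge i j with h | h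
    · exact hne (key k n hk neg p hp ζ hζ m hm i j hi hj h heq)
    · have h' : j < i := by omega
      exact hne (key k n hk neg p hp ζ hζ m hm j i hj hi h' heq.symm)
  refine ⟨main, fun h0 h1 => main ?_⟩
  intro hE
  have hω : omegaWord hk neg = fun a => if a = 0 then (⟨0, by omega⟩ : Fin k) else ⟨k - 1, by omega⟩ := by
    simp [omegaWord, h0, h1]
  have c0 : periodic p hp 0 = periodic p hp p.length := by
    simp [periodic, Nat.mod_self]
  rw [hE, hω] at c0
  simp only [if_pos rfl, if_neg (by omega : ¬ p.length = 0)] at c0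
  have : (0 : ℕ) = k - 1 := congrArg Fin.val c0
  omega
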